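/- The probability Q̃2 = P( Ps·Z > τ(G), Z > (G/α0 − 1)·(P0·G + 1)/Ps, log2(1 + Ps·Z/(P0·G + 1)) < Rs, G > α0 ) equals Σ_{i=1}^{M} C(M,i)·(−1)^i·[ e^{−i·αs}·u(α0, α1, i·αs·P0) − e^{i/Ps}·v(α1, α0, i·P0/(Ps·α0), (i/Ps)·(1/α0 − P0) + 1) ], where C(M,i) is the binomial coefficient. -/

import Mathlib

/-!
Given `G = g`, the event says `α0 < g` and that `Z` lies strictly between
`L g = (g/α0 - 1)(P0 g + 1)/Ps` and `U g = αs (P0 g + 1)`: the logarithmic constraint is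
`Z < U g`, and the constraint `Ps Z > τ(g)` is implied by `Z > L g`. This band is nonempty
exactly for `g < α1`. Splitting off the coordinate `G`, the law of `(G, H)` is
`Exp(1) ⊗ Exp(1)^M`, and the maximum of `M` independent `Exp(1)` variables has distribution
function `(1 - e^{-z})^M`, so `Q̃₂ = ∫_{α0}^{α1} e^{-g} ((1 - e^{-U g})^M - (1 - e^{-L g})^M) dg`.
Expanding both powers binomially, the `U`-terms integrate an exponential of an affine function
of `g` (giving `u`), and the `L`-terms a Gaussian, which after completing the square gives `v`.
-/

open MeasureTheory ProbabilityTheory Real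

/-- The interference threshold `τ(g) = max{0, g/α₀ − 1}`. -/
noncomputable def tau (α0 g : ℝ) : ℝ := max 0 (g / α0 - 1)

/-- The Gaussian error function `erf(x) = (2/√π) ∫₀ˣ e^{−t²} dt`. -/
noncomputable def erf (x : ℝ) : ℝ :=
  2 / Real.sqrt Real.pi * ∫ t in (0 : ℝ)..x, Real.exp (-t ^ 2)

/-- `u(a,b,c) = (e^{−a(c+1)} − e^{−b(c+1)}) / (c+1)`. -/
noncomputable def uFun (a b c : ℝ) : ℝ :=
  (Real.exp (-a * (c + 1)) - Real.exp (-b * (c + 1))) / (c + 1)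

/-- `v(b,a,A,B) = (√π e^{B²/(4A)} / (2√A)) (erf(√A (b + B/(2A))) − erf(√A (a + B/(2A))))`. -/
noncomputable def vFun (b a A B : ℝ) : ℝ :=
  Real.sqrt Real.pi * Real.exp (B ^ 2 / (4 * A)) / (2 * Real.sqrt A) *
    (erf (Real.sqrt A * (b + B / (2 * A))) - erf (Real.sqrt A * (a + B / (2 * A))))

open Set

noncomputable def maxExpCDF (n : ℕ) (z : ℝ) : ℝ := (1 - exp (-z)) ^ n

lemma maxExpCDF_le_maxExpCDF {n : ℕ} {s t : ℝ} (hs : 0 ≤ s) (hst : s ≤ t) :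
    maxExpCDF n s ≤ maxExpCDF n t := by
  have : exp (-s) ≤ 1 := exp_le_one_iff.2 (by linarith)
  unfold maxExpCDF
  gcongr

lemma maxExpCDF_eq_sum (n : ℕ) (t : ℝ) :
    maxExpCDF n t =
      ∑ i ∈ Finset.range (n + 1), (n.choose i : ℝ) * (-1) ^ i * exp (-(i * t)) := by
  rw [maxExpCDF, sub_eq_neg_add, add_pow]
  refine Finset.sum_congr rfl fun i _ => ?_
  rw [neg_pow, ← exp_nat_mul]
  ring_nf

lemma maxExpCDF_sub_eq_sum (n : ℕ) (s t : ℝ) :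
    maxExpCDF n t - maxExpCDF n s =
      ∑ i ∈ Finset.Icc 1 n,
        (n.choose i : ℝ) * (-1) ^ i * (exp (-(i * t)) - exp (-(i * s))) := by
  rw [maxExpCDF_eq_sum, maxExpCDF_eq_sum, ← Finset.sum_sub_distrib, Finset.range_eq_Ico,
    Finset.sum_eq_sum_Ico_succ_bot n.succ_pos, zero_add, Nat.succ_eq_add_one,
    Finset.Ico_add_one_right_eq_Icc]
  simp only [Nat.cast_zero, zero_mul, sub_self, zero_add]
  exact Finset.sum_congr rfl fun i _ => by ring

lemma integral_exp_neg_mul_eq_uFun (a b c : ℝ) (hc : c + 1 ≠ 0) :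
    ∫ x in a..b, exp (-((c + 1) * x)) = uFun a b c := by
  have h := intervalIntegral.integral_comp_mul_left exp (a := a) (b := b) (neg_ne_zero.2 hc)
  simp only [neg_mul] at h
  rw [h, integral_exp, uFun, smul_eq_mul]
  field_simp
  ring_nf

lemma integral_exp_neg_sq_eq_erf_sub (u w : ℝ) :
    ∫ s in u..w, exp (-s ^ 2) = √π / 2 * (erf w - erf u) := by
  have hint (y : ℝ) : IntervalIntegrable (fun s => exp (-s ^ 2)) volume 0 y :=
    (by fun_prop : Continuous fun s : ℝ => exp (-s ^ 2)).intervalIntegrable _ _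
  rw [← intervalIntegral.integral_interval_sub_left (hint w) (hint u), erf, erf]
  have : √π ≠ 0 := by positivity
  field_simp

lemma integral_exp_neg_quadratic_eq_vFun (a b A B : ℝ) (hA : 0 < A) :
    ∫ x in a..b, exp (-(A * x ^ 2 + B * x)) = vFun b a A B := by
  set c := B / (2 * A) with hc
  have hsA : √A ≠ 0 := by positivity
  have hsquare (x : ℝ) :
      exp (-(A * x ^ 2 + B * x)) = exp (B ^ 2 / (4 * A)) * exp (-(√A * (x + c)) ^ 2) := by
    rw [← exp_add, mul_pow, sq_sqrt hA.le]
    congr 1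
    rw [hc]
    field_simp
    ring
  simp_rw [hsquare]
  rw [intervalIntegral.integral_const_mul,
    intervalIntegral.integral_comp_add_right (fun t => exp (-(√A * t) ^ 2)),
    intervalIntegral.integral_comp_mul_left (fun s => exp (-s ^ 2)) hsA,
    integral_exp_neg_sq_eq_erf_sub, vFun, ← hc]
  ring

lemma setOf_iSup_le_eq_pi {ι : Type*} [Finite ι] {z : ℝ} (hz : 0 ≤ z) :
    {h : ι → ℝ | ⨆ i, h i ≤ z} = univ.pi fun _ => Iic z := by
  ext h
  simp only [mem_ofPred_eq, mem_univ_pi, mem_Iic]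
  exact ⟨fun hle i => (le_ciSup (Finite.bddAbove_range h) i).trans hle,
    fun hle => Real.iSup_le hle hz⟩

lemma setOf_iSup_lt_eq_pi {ι : Type*} [Finite ι] {z : ℝ} (hz : 0 < z) :
    {h : ι → ℝ | ⨆ i, h i < z} = univ.pi fun _ => Iio z := by
  ext h
  simp only [mem_ofPred_eq, mem_univ_pi, mem_Iio]
  refine ⟨fun hlt i => (le_ciSup (Finite.bddAbove_range h) i).trans_lt hlt, fun hlt => ?_⟩
  rcases isEmpty_or_nonempty ι with hι | hι
  · rwa [Real.iSup_of_isEmpty]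
  · obtain ⟨i, hi⟩ := exists_eq_ciSup_of_finite (f := h)
    exact hi ▸ hlt i

lemma expMeasure_one_Iic {z : ℝ} (hz : 0 ≤ z) :
    expMeasure 1 (Iic z) = ENNReal.ofReal (1 - exp (-z)) := by
  have := isProbabilityMeasure_expMeasure one_pos
  rw [← ofReal_cdf, cdf_expMeasure_eq one_pos, if_pos hz, one_mul]

lemma expMeasure_one_Iio {z : ℝ} (hz : 0 ≤ z) :
    expMeasure 1 (Iio z) = ENNReal.ofReal (1 - exp (-z)) := by
  have hz_null : expMeasure 1 {z} = 0 :=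
    withDensity_absolutelyContinuous _ _ (Real.volume_singleton)
  rw [← Iic_sdiff_right, measure_sdiff_null hz_null, expMeasure_one_Iic hz]

lemma pi_expMeasure_one_iSup_mem_Ioo {ι : Type*} [Fintype ι] {a b : ℝ} (ha : 0 ≤ a)
    (hab : a < b) :
    Measure.pi (fun _ : ι => expMeasure 1) {h | a < ⨆ i, h i ∧ ⨆ i, h i < b} =
      ENNReal.ofReal (maxExpCDF (Fintype.card ι) b - maxExpCDF (Fintype.card ι) a) := by
  have := isProbabilityMeasure_expMeasure one_pos
  have hset : {h : ι → ℝ | a < ⨆ i, h i ∧ ⨆ i, h i < b} =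
      {h | ⨆ i, h i < b} \ {h | ⨆ i, h i ≤ a} := by
    ext h
    simp only [mem_ofPred_eq, mem_sdiff, not_le]
    tauto
  have hmeas : MeasurableSet {h : ι → ℝ | ⨆ i, h i ≤ a} :=
    measurableSet_le (Measurable.iSup fun i => measurable_pi_apply i) measurable_const
  have hnonneg : 0 ≤ 1 - exp (-a) := sub_nonneg.2 (exp_le_one_iff.2 (by linarith))
  have hsub : {h : ι → ℝ | ⨆ i, h i ≤ a} ⊆ {h | ⨆ i, h i < b} :=
    fun h hh => lt_of_le_of_lt hh hab
  rw [hset, measure_sdiff hsub hmeas.nullMeasurableSet (measure_ne_top _ _),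
    setOf_iSup_lt_eq_pi (ha.trans_lt hab), setOf_iSup_le_eq_pi ha,
    Measure.pi_pi, Measure.pi_pi, Finset.prod_const, Finset.prod_const, Finset.card_univ,
    expMeasure_one_Iio (ha.trans hab.le), expMeasure_one_Iic ha, ← ENNReal.ofReal_pow hnonneg,
    ← ENNReal.ofReal_pow (hnonneg.trans (by gcongr)),
    ← ENNReal.ofReal_sub _ (pow_nonneg hnonneg _)]
  rfl

lemma ProbabilityTheory.iIndepFun.map_fin_cons_eq_prod_pi {Ω β : Type*} [MeasurableSpace Ω]
    [MeasurableSpace β] {μ : Measure Ω} {n : ℕ} {X : Ω → β} {Y : Fin n → Ω → β} (hX : Measurable X)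
    (hY : ∀ i, Measurable (Y i)) (h : iIndepFun (Fin.cons X Y : Fin (n + 1) → Ω → β) μ) :
    μ.map (fun ω => (X ω, fun i => Y i ω)) =
      (μ.map X).prod (Measure.pi fun i => μ.map (Y i)) := by
  have := h.isProbabilityMeasure
  have hmeas : ∀ i, Measurable ((Fin.cons X Y : Fin (n + 1) → Ω → β) i) :=
    Fin.cases hX hY
  have hcomp : (fun ω => (X ω, fun i => Y i ω)) =
      MeasurableEquiv.piFinSuccAbove (fun _ => β) 0 ∘
        fun ω i => (Fin.cons X Y : Fin (n + 1) → Ω → β) i ω := by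
    ext ω <;> simp [Fin.tail]
  rw [hcomp, ← Measure.map_map (MeasurableEquiv.measurable _) (measurable_pi_lambda _ hmeas),
    h.map_fun_eq_pi_map fun i => (hmeas i).aemeasurable,
    (measurePreserving_piFinSuccAbove _ 0).map_eq]
  simp

def maxBand {ι : Type*} (a : ℝ) (L U : ℝ → ℝ) : Set (ℝ × (ι → ℝ)) :=
  {p | a < p.1 ∧ L p.1 < ⨆ i, p.2 i ∧ ⨆ i, p.2 i < U p.1}

section MaxBand

variable {ι : Type*} [Fintype ι] {a b : ℝ} {L U : ℝ → ℝ}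

lemma measurableSet_maxBand (hL : Measurable L) (hU : Measurable U) :
    MeasurableSet (maxBand (ι := ι) a L U) := by
  have hmax : Measurable fun p : ℝ × (ι → ℝ) => ⨆ i, p.2 i :=
    Measurable.iSup fun i => (measurable_pi_apply i).comp measurable_snd
  exact (measurableSet_lt measurable_const measurable_fst).inter
    ((measurableSet_lt (hL.comp measurable_fst) hmax).inter
      (measurableSet_lt hmax (hU.comp measurable_fst)))

lemma pi_expMeasure_one_prodMk_preimage_maxBand (hL : ∀ g, a < g → 0 ≤ L g)
    (hLU : ∀ g, a < g → (L g < U g ↔ g < b)) (g : ℝ) :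
    Measure.pi (fun _ : ι => expMeasure 1) (Prod.mk g ⁻¹' maxBand a L U) =
      (Ioo a b).indicator
        (fun g => ENNReal.ofReal (maxExpCDF (Fintype.card ι) (U g) -
          maxExpCDF (Fintype.card ι) (L g))) g := by
  by_cases hag : a < g
  · by_cases hgb : g < b
    · have hslice : Prod.mk g ⁻¹' maxBand a L U =
          {h : ι → ℝ | L g < ⨆ i, h i ∧ ⨆ i, h i < U g} := by
        ext h; simp [maxBand, hag]
      rw [hslice, pi_expMeasure_one_iSup_mem_Ioo (hL g hag) ((hLU g hag).2 hgb),
        indicator_of_mem (show g ∈ Ioo a b from ⟨hag, hgb⟩)]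
    · have hslice : Prod.mk g ⁻¹' maxBand (ι := ι) a L U = ∅ := by
        ext h
        simp only [maxBand, mem_preimage, mem_ofPred_eq, mem_empty_iff_false, iff_false]
        rintro ⟨-, hL', hU'⟩
        exact hgb ((hLU g hag).1 (hL'.trans hU'))
      rw [hslice, measure_empty, indicator_of_notMem fun hg => hgb hg.2]
  · have hslice : Prod.mk g ⁻¹' maxBand (ι := ι) a L U = ∅ := by
      ext h
      simp only [maxBand, mem_preimage, mem_ofPred_eq, mem_empty_iff_false, iff_false]
      exact fun hband => hag hband.1
    rw [hslice, measure_empty, indicator_of_notMem fun hg => hag hg.1]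

lemma prod_expMeasure_one_maxBand (ha : 0 ≤ a) (hab : a ≤ b) (hLc : Continuous L)
    (hUc : Continuous U) (hL : ∀ g, a < g → 0 ≤ L g)
    (hLU : ∀ g, a < g → (L g < U g ↔ g < b)) :
    (((expMeasure 1).prod (Measure.pi fun _ : ι => expMeasure 1)) (maxBand a L U)).toReal =
      ∫ g in a..b, exp (-g) * (maxExpCDF (Fintype.card ι) (U g) -
        maxExpCDF (Fintype.card ι) (L g)) := by
  have := isProbabilityMeasure_expMeasure one_pos
  set f := fun g => exp (-g) * (maxExpCDF (Fintype.card ι) (U g) -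
    maxExpCDF (Fintype.card ι) (L g))
  have hf_nonneg : ∀ g ∈ Ioo a b, 0 ≤ f g := fun g ⟨hag, hgb⟩ =>
    mul_nonneg (exp_pos _).le (sub_nonneg.2
      (maxExpCDF_le_maxExpCDF (hL g hag) ((hLU g hag).2 hgb).le))
  have hf_int : IntegrableOn f (Ioo a b) := by
    refine (Continuous.integrableOn_Icc ?_).mono_set Ioo_subset_Icc_self
    simp only [f, maxExpCDF]
    fun_prop
  have hlintegral : ((expMeasure 1).prod (Measure.pi fun _ : ι => expMeasure 1)) (maxBand a L U)
      = ∫⁻ g in Ioo a b, ENNReal.ofReal (f g) := by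
    rw [Measure.prod_apply (measurableSet_maxBand hLc.measurable hUc.measurable)]
    simp_rw [pi_expMeasure_one_prodMk_preimage_maxBand hL hLU]
    have hdensity : expMeasure 1 = volume.withDensity (exponentialPDF 1) := rfl
    have hpdf : Measurable (exponentialPDF 1) := (measurable_exponentialPDFReal 1).ennreal_ofReal
    have hcdf : Measurable fun g => ENNReal.ofReal
        (maxExpCDF (Fintype.card ι) (U g) - maxExpCDF (Fintype.card ι) (L g)) := by
      simp only [maxExpCDF]
      fun_prop
    rw [lintegral_indicator measurableSet_Ioo, hdensity,
      setLIntegral_withDensity_eq_setLIntegral_mul _ hpdf hcdf measurableSet_Ioo]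
    refine setLIntegral_congr_fun measurableSet_Ioo fun g hg => ?_
    rw [Pi.mul_apply, exponentialPDF_of_nonneg (ha.trans hg.1.le), one_mul, one_mul,
      ← ENNReal.ofReal_mul (exp_pos _).le]
  rw [hlintegral, ← ofReal_integral_eq_lintegral_ofReal hf_int
      ((ae_restrict_iff' measurableSet_Ioo).2 (Filter.Eventually.of_forall hf_nonneg)),
    ENNReal.toReal_ofReal (setIntegral_nonneg measurableSet_Ioo hf_nonneg),
    intervalIntegral.integral_of_le hab, integral_Ioc_eq_integral_Ioo]

end MaxBand

lemma outage_condition_iff {α0 P0 Ps Rs g z : ℝ} (hα0 : 0 < α0) (hP0 : 0 < P0)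
    (hPs : 0 < Ps) :
    (Ps * z > tau α0 g ∧ z > (g / α0 - 1) * (P0 * g + 1) / Ps ∧
        logb 2 (1 + Ps * z / (P0 * g + 1)) < Rs ∧ g > α0) ↔
      (α0 < g ∧ (g / α0 - 1) * (P0 * g + 1) / Ps < z ∧
        z < (2 ^ Rs - 1) / Ps * (P0 * g + 1)) := by
  by_cases hg : α0 < g
  swap
  · simp only [gt_iff_lt, hg, and_false, false_and]
  have hg0 : 0 < g := hα0.trans hg
  have hk : 0 < P0 * g + 1 := by positivity
  have hd : 0 < g / α0 - 1 := sub_pos.2 ((one_lt_div hα0).2 hg)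
  have hL : 0 < (g / α0 - 1) * (P0 * g + 1) / Ps := by positivity
  have hlogb (hz : 0 < z) :
      logb 2 (1 + Ps * z / (P0 * g + 1)) < Rs ↔ z < (2 ^ Rs - 1) / Ps * (P0 * g + 1) := by
    rw [logb_lt_iff_lt_rpow one_lt_two (by positivity), ← lt_sub_iff_add_lt', div_lt_iff₀ hk,
      div_mul_eq_mul_div, lt_div_iff₀ hPs, mul_comm z]
  simp only [gt_iff_lt, hg, and_true, true_and, tau, max_eq_right hd.le]
  constructor
  · rintro ⟨-, hLz, hlog⟩
    exact ⟨hLz, (hlogb (hL.trans hLz)).1 hlog⟩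
  · rintro ⟨hLz, hU⟩
    refine ⟨?_, hLz, (hlogb (hL.trans hLz)).2 hU⟩
    rw [div_lt_iff₀ hPs] at hLz
    nlinarith [mul_nonneg hd.le (mul_nonneg hP0.le hg0.le)]

lemma div_sub_one_mul_div_lt_div_mul_iff {α0 P0 Ps εs g : ℝ} (hα0 : 0 < α0) (hPs : 0 < Ps)
    (hk : 0 < P0 * g + 1) :
    (g / α0 - 1) * (P0 * g + 1) / Ps < εs / Ps * (P0 * g + 1) ↔ g < (1 + εs) * α0 := by
  rw [mul_div_assoc, div_mul_eq_mul_div, mul_div_assoc,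
    mul_lt_mul_iff_left₀ (by positivity), sub_lt_iff_lt_add', div_lt_iff₀ hα0]

lemma integral_exp_neg_mul_sub_maxExpCDF_eq_sum (M : ℕ) {P0 Ps α0 αs : ℝ} (hP0 : 0 < P0)
    (hPs : 0 < Ps) (hα0 : 0 < α0) (hαs : 0 ≤ αs) (b : ℝ) :
    ∫ g in α0..b, exp (-g) * (maxExpCDF M (αs * (P0 * g + 1)) -
        maxExpCDF M ((g / α0 - 1) * (P0 * g + 1) / Ps)) =
      ∑ i ∈ Finset.Icc 1 M,
        (M.choose i : ℝ) * (-1 : ℝ) ^ i *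
          (exp (-(i : ℝ) * αs) * uFun α0 b ((i : ℝ) * αs * P0) -
           exp ((i : ℝ) / Ps) *
             vFun b α0 ((i : ℝ) * P0 / (Ps * α0))
               (((i : ℝ) / Ps) * (1 / α0 - P0) + 1)) := by
  simp_rw [maxExpCDF_sub_eq_sum, Finset.mul_sum]
  rw [intervalIntegral.integral_finsetSum fun i _ =>
    (Continuous.intervalIntegrable (by fun_prop) _ _)]
  refine Finset.sum_congr rfl fun i hi => ?_
  have hi : (0 : ℝ) < i := Nat.cast_pos.2 (Finset.mem_Icc.1 hi).1
  have hupper (g : ℝ) : exp (-g) * exp (-(i * (αs * (P0 * g + 1)))) =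
      exp (-i * αs) * exp (-((i * αs * P0 + 1) * g)) := by
    rw [← exp_add, ← exp_add]; ring_nf
  have hlower (g : ℝ) : exp (-g) * exp (-(i * ((g / α0 - 1) * (P0 * g + 1) / Ps))) =
      exp (i / Ps) *
        exp (-(i * P0 / (Ps * α0) * g ^ 2 + (i / Ps * (1 / α0 - P0) + 1) * g)) := by
    rw [← exp_add, ← exp_add]
    congr 1
    field_simp
    ring
  calc ∫ g in α0..b, exp (-g) * ((M.choose i : ℝ) * (-1) ^ i *
          (exp (-(i * (αs * (P0 * g + 1)))) - exp (-(i * ((g / α0 - 1) * (P0 * g + 1) / Ps)))))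
      = (M.choose i : ℝ) * (-1) ^ i *
          ((∫ g in α0..b, exp (-g) * exp (-(i * (αs * (P0 * g + 1))))) -
            ∫ g in α0..b, exp (-g) * exp (-(i * ((g / α0 - 1) * (P0 * g + 1) / Ps)))) := by
        rw [← intervalIntegral.integral_sub
          (Continuous.intervalIntegrable (by fun_prop) _ _)
          (Continuous.intervalIntegrable (by fun_prop) _ _),
          ← intervalIntegral.integral_const_mul]
        congr 1 with g
        ring
    _ = _ := by
        simp_rw [hupper, hlower, intervalIntegral.integral_const_mul]
        rw [integral_exp_neg_mul_eq_uFun _ _ _ (by positivity),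
          integral_exp_neg_quadratic_eq_vFun _ _ _ _ (by positivity)]

theorem hsic_pa_Q2_closed_form_general
    {Ω : Type*} [MeasurableSpace Ω] (μ : Measure Ω)
    (M : ℕ)
    (P0 Ps R0 Rs : ℝ) (hP0 : 0 < P0) (hPs : 0 < Ps) (hR0 : 0 < R0) (hRs : 0 < Rs)
    (ε0 εs α0 αs α1 : ℝ)
    (hε0 : ε0 = 2 ^ R0 - 1) (hεs : εs = 2 ^ Rs - 1)
    (hα0 : α0 = ε0 / P0) (hαs : αs = εs / Ps) (hα1 : α1 = (1 + εs) * α0)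
    (G : Ω → ℝ) (H : Fin M → Ω → ℝ)
    (hGmeas : Measurable G) (hHmeas : ∀ m, Measurable (H m))
    (hGdist : Measure.map G μ = expMeasure 1)
    (hHdist : ∀ m, Measure.map (H m) μ = expMeasure 1)
    (hIndep : iIndepFun
      (Fin.cons G H : Fin (M + 1) → Ω → ℝ) μ)
    (Z : Ω → ℝ) (hZ : ∀ ω, Z ω = ⨆ m : Fin M, H m ω)
    :
    (μ {ω | Ps * Z ω > tau α0 (G ω) ∧
            Z ω > (G ω / α0 - 1) * (P0 * G ω + 1) / Ps ∧
            Real.logb 2 (1 + Ps * Z ω / (P0 * G ω + 1)) < Rs ∧ G ω > α0}).toReal =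
      ∑ i ∈ Finset.Icc 1 M,
        (M.choose i : ℝ) * (-1 : ℝ) ^ i *
          (Real.exp (-(i : ℝ) * αs) * uFun α0 α1 ((i : ℝ) * αs * P0) -
           Real.exp ((i : ℝ) / Ps) *
             vFun α1 α0 ((i : ℝ) * P0 / (Ps * α0))
               (((i : ℝ) / Ps) * (1 / α0 - P0) + 1)) := by
  have hεs_pos : 0 < εs := by rw [hεs]; linarith [one_lt_rpow one_lt_two hRs]
  have hα0_pos : 0 < α0 := by
    rw [hα0, hε0]
    exact div_pos (by linarith [one_lt_rpow one_lt_two hR0]) hP0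
  have hα01 : α0 ≤ α1 := by rw [hα1]; nlinarith
  set L : ℝ → ℝ := fun g => (g / α0 - 1) * (P0 * g + 1) / Ps
  set U : ℝ → ℝ := fun g => αs * (P0 * g + 1)
  have hL_nonneg (g : ℝ) (hg : α0 < g) : 0 ≤ L g :=
    div_nonneg (mul_nonneg (sub_nonneg.2 ((one_le_div hα0_pos).2 hg.le))
      (by nlinarith)) hPs.le
  have hLU (g : ℝ) (hg : α0 < g) : L g < U g ↔ g < α1 := by
    simp only [L, U, hα1, hαs]
    exact div_sub_one_mul_div_lt_div_mul_iff hα0_pos hPs (by nlinarith)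
  have hevent : {ω | Ps * Z ω > tau α0 (G ω) ∧ Z ω > (G ω / α0 - 1) * (P0 * G ω + 1) / Ps ∧
        Real.logb 2 (1 + Ps * Z ω / (P0 * G ω + 1)) < Rs ∧ G ω > α0} =
      (fun ω => (G ω, fun m => H m ω)) ⁻¹' maxBand α0 L U := by
    ext ω
    simp only [mem_ofPred_eq, mem_preimage, maxBand, L, U, ← hZ, hαs, hεs]
    exact outage_condition_iff hα0_pos hP0 hPs
  rw [hevent, ← Measure.map_apply (hGmeas.prodMk (measurable_pi_lambda _ hHmeas))
      (measurableSet_maxBand (by fun_prop) (by fun_prop)),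
    hIndep.map_fin_cons_eq_prod_pi hGmeas hHmeas, hGdist, funext hHdist,
    prod_expMeasure_one_maxBand hα0_pos.le hα01 (by fun_prop) (by fun_prop)
      hL_nonneg hLU, Fintype.card_fin]
  exact integral_exp_neg_mul_sub_maxExpCDF_eq_sum M hP0 hPs hα0_pos (hαs ▸ by positivity) α1

/-- closed form for the probability `Q̃₂` appearing in the proof of
Theorem 1 for the HSIC-PA scheme. -/
theorem hsic_pa_Q2_closed_form
    {Ω : Type*} [MeasurableSpace Ω] (μ : Measure Ω) [IsProbabilityMeasure μ]
    (M : ℕ) (hM : 1 ≤ M)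
    (P0 Ps R0 Rs : ℝ) (hP0 : 0 < P0) (hPs : 0 < Ps) (hR0 : 0 < R0) (hRs : 0 < Rs)
    (ε0 εs α0 αs α1 : ℝ)
    (hε0 : ε0 = 2 ^ R0 - 1) (hεs : εs = 2 ^ Rs - 1)
    (hα0 : α0 = ε0 / P0) (hαs : αs = εs / Ps) (hα1 : α1 = (1 + εs) * α0)
    (G : Ω → ℝ) (H : Fin M → Ω → ℝ)
    (hGmeas : Measurable G) (hHmeas : ∀ m, Measurable (H m))
    (hGnn : ∀ ω, 0 ≤ G ω) (hHnn : ∀ m ω, 0 ≤ H m ω)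
    (hGdist : Measure.map G μ = expMeasure 1)
    (hHdist : ∀ m, Measure.map (H m) μ = expMeasure 1)
    (hIndep : iIndepFun
      (Fin.cons G H : Fin (M + 1) → Ω → ℝ) μ)
    (Z : Ω → ℝ) (hZ : ∀ ω, Z ω = ⨆ m : Fin M, H m ω)
    :
    (μ {ω | Ps * Z ω > tau α0 (G ω) ∧
            Z ω > (G ω / α0 - 1) * (P0 * G ω + 1) / Ps ∧
            Real.logb 2 (1 + Ps * Z ω / (P0 * G ω + 1)) < Rs ∧ G ω > α0}).toReal =
      ∑ i ∈ Finset.Icc 1 M,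
        (M.choose i : ℝ) * (-1 : ℝ) ^ i *
          (Real.exp (-(i : ℝ) * αs) * uFun α0 α1 ((i : ℝ) * αs * P0) -
           Real.exp ((i : ℝ) / Ps) *
             vFun α1 α0 ((i : ℝ) * P0 / (Ps * α0))
               (((i : ℝ) / Ps) * (1 / α0 - P0) + 1)) :=
  hsic_pa_Q2_closed_form_general μ M P0 Ps R0 Rs hP0 hPs hR0 hRs ε0 εs α0 αs α1 hε0 hεs hα0 hαs hα1
    G H hGmeas hHmeas hGdist hHdist hIndep Z hZ
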